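/- arXiv:math/0505381 — 10 statements merged into one kernel-verified Lean document; each statement's English description precedes it below -/
import Mathlib

section
/- Let S be a join-semilattice with zero and δ : X × X → S an S-valued distance satisfying the V-condition. Then the map φ : S → Eq(X) defined by φ(a) = {(x,y) | δ(x,y) ≤ a} is a join-homomorphism, i.e., φ(a ∨ b) = φ(a) ∨ φ(b) where the join on the right is taken in the lattice of equivalence relations on X. -/
/-- An `S`-valued distance on `X`. -/
def IsSDistance {X : Type*} {S : Type*} [SemilatticeSup S] [OrderBot S]
    (δ : X → X → S) : Prop :=
  (∀ x, δ x x = ⊥) ∧ (∀ x y, δ x y = δ y x) ∧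
    (∀ x y z, δ x z ≤ δ x y ⊔ δ y z)

/-- The V-condition: whenever `δ x y ≤ a ⊔ b` there is an alternating chain
`z 0 = x, …, z (n+1) = y` with even steps below `a` and odd steps below `b`. -/
def VCondition {X : Type*} {S : Type*} [SemilatticeSup S] [OrderBot S]
    (δ : X → X → S) : Prop :=
  ∀ x y : X, ∀ a b : S, δ x y ≤ a ⊔ b →
    ∃ n : ℕ, 0 < n ∧ ∃ z : ℕ → X, z 0 = x ∧ z (n + 1) = y ∧
      ∀ i ≤ n, (Even i → δ (z i) (z (i + 1)) ≤ a) ∧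
        (Odd i → δ (z i) (z (i + 1)) ≤ b)

/-! Sublevel sets of an `S`-valued distance are equivalence relations (reflexivity, symmetry and
the ultrametric triangle inequality), so the join of `φ a` and `φ b` lies inside `φ (a ⊔ b)`;
conversely the alternating chain supplied by the V-condition is a path in `φ a ∪ φ b`. -/

open Relation

theorem reflTransGen_of_chain {X : Type*} {r : X → X → Prop} {z : ℕ → X} {m : ℕ}
    (h : ∀ i < m, r (z i) (z (i + 1))) : ReflTransGen r (z 0) (z m) :=
  ReflTransGen.lift z (fun _ _ => id) _ _ <|
    reflTransGen_of_succ_of_le (fun i j => r (z i) (z j)) (fun i hi => h i hi.2) m.zero_le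

section
variable {X S : Type*} [SemilatticeSup S] [OrderBot S] {δ : X → X → S}

theorem IsSDistance.equivalence_le (hδ : IsSDistance δ) (c : S) :
    Equivalence fun x y => δ x y ≤ c where
  refl x := hδ.1 x ▸ bot_le
  symm {x y} h := hδ.2.1 x y ▸ h
  trans {x y z} hxy hyz := (hδ.2.2 x y z).trans (sup_le hxy hyz)

theorem IsSDistance.le_sup_of_eqvGen (hδ : IsSDistance δ) {a b : S} {x y : X}
    (h : EqvGen (fun u v => δ u v ≤ a ∨ δ u v ≤ b) x y) : δ x y ≤ a ⊔ b :=
  (hδ.equivalence_le (a ⊔ b)).eqvGen_iff.mp <|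
    EqvGen.mono (fun _ _ huv => huv.elim le_sup_of_le_left le_sup_of_le_right) _ _ h

theorem VCondition.eqvGen_of_le_sup (hV : VCondition δ) {a b : S} {x y : X}
    (h : δ x y ≤ a ⊔ b) : EqvGen (fun u v => δ u v ≤ a ∨ δ u v ≤ b) x y := by
  obtain ⟨n, -, z, rfl, rfl, hstep⟩ := hV x y a b h
  refine EqvGen.reflTransGen_le_eqvGen _ _ _ (reflTransGen_of_chain fun i hi => ?_)
  have hin : i ≤ n := Nat.le_of_lt_succ hi
  rcases i.even_or_odd with heven | hodd
  · exact .inl ((hstep i hin).1 heven)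
  · exact .inr ((hstep i hin).2 hodd)
end

/-- If `δ` is an `S`-valued distance satisfying the V-condition, then
`φ(a) = {(x,y) | δ(x,y) ≤ a}` is a join-homomorphism to equivalence relations:
`φ(a ⊔ b)` is the join (equivalence closure of the union) of `φ(a)` and `φ(b)`. -/
theorem phi_join_hom {X : Type*} {S : Type*} [SemilatticeSup S] [OrderBot S]
    (δ : X → X → S) (hδ : IsSDistance δ) (hV : VCondition δ) (a b : S) :
    ∀ x y : X, δ x y ≤ a ⊔ b ↔
      Relation.EqvGen (fun u v : X => δ u v ≤ a ∨ δ u v ≤ b) x y :=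
  fun _ _ => ⟨hV.eqvGen_of_le_sup, hδ.le_sup_of_eqvGen⟩
end

section
/- Let n be a positive integer, S a join-semilattice with zero, and δ : X × X → S a V-distance of type n. Then any two equivalence relations in the range of the associated map φ : S → Eq(X), φ(a) = {(x,y) | δ(x,y) ≤ a}, are (n+1)-permutable. -/
/-- The V-condition of type `n`. -/
def VConditionType {X : Type*} {S : Type*} [SemilatticeSup S] [OrderBot S]
    (n : ℕ) (δ : X → X → S) : Prop :=
  ∀ x y : X, ∀ a b : S, δ x y ≤ a ⊔ b →
    ∃ z : ℕ → X, z 0 = x ∧ z (n + 1) = y ∧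
      ∀ i ≤ n, (Even i → δ (z i) (z (i + 1)) ≤ a) ∧
        (Odd i → δ (z i) (z (i + 1)) ≤ b)

/-- The composition `γ_0 ∘ γ_1 ∘ ⋯ ∘ γ_k` of relations:
`relChainComp γ k x y` holds iff there is a chain from `x` to `y` whose `i`-th
step lies in `γ i`, for `i = 0, …, k`. -/
def relChainComp {X : Type*} (γ : ℕ → X → X → Prop) : ℕ → X → X → Prop
  | 0 => γ 0
  | k + 1 => fun x y => ∃ z, relChainComp γ k x z ∧ γ (k + 1) z y

/-- The alternating sequence of relations: `α` at even places, `β` at odd ones. -/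
def altRel {X : Type*} (α β : X → X → Prop) (k : ℕ) : X → X → Prop :=
  if Even k then α else β

lemma relChainComp_of_forall {X : Type*} (γ : ℕ → X → X → Prop) (k : ℕ) (z : ℕ → X)
    (hz : ∀ i ≤ k, γ i (z i) (z (i + 1))) : relChainComp γ k (z 0) (z (k + 1)) := by
  induction k with
  | zero => exact hz 0 le_rfl
  | succ k ih => exact ⟨z (k + 1), ih fun i hi => hz i (hi.trans k.le_succ), hz (k + 1) le_rfl⟩

lemma le_of_relChainComp {X S : Type*} [SemilatticeSup S] {δ : X → X → S}
    (htri : ∀ x y z, δ x z ≤ δ x y ⊔ δ y z) {γ : ℕ → X → X → Prop} {c : S}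
    (hγ : ∀ i u v, γ i u v → δ u v ≤ c) (k : ℕ) {x y : X} (h : relChainComp γ k x y) :
    δ x y ≤ c := by
  induction k generalizing y with
  | zero => exact hγ 0 x y h
  | succ k ih =>
    obtain ⟨z, hxz, hzy⟩ := h
    exact (htri x z y).trans (sup_le (ih hxz) (hγ _ _ _ hzy))

lemma altRel_le_sup {X S : Type*} [SemilatticeSup S] {δ : X → X → S} {c d : S} {i : ℕ}
    {u v : X} (h : altRel (fun u v => δ u v ≤ c) (fun u v => δ u v ≤ d) i u v) :
    δ u v ≤ c ⊔ d := by
  unfold altRel at h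
  split_ifs at h
  · exact h.trans le_sup_left
  · exact h.trans le_sup_right

lemma relChainComp_altRel_of_vCondition {X S : Type*} [SemilatticeSup S] [OrderBot S]
    {n : ℕ} {δ : X → X → S} (hV : VConditionType n δ) {c d : S} {x y : X}
    (hxy : δ x y ≤ c ⊔ d) :
    relChainComp (altRel (fun u v => δ u v ≤ c) (fun u v => δ u v ≤ d)) n x y := by
  obtain ⟨z, rfl, rfl, hz⟩ := hV x y c d hxy
  refine relChainComp_of_forall _ n z fun i hi => ?_
  unfold altRel
  split_ifs with hi_even
  · exact (hz i hi).1 hi_even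
  · exact (hz i hi).2 (Nat.not_even_iff_odd.mp hi_even)

lemma relChainComp_altRel_swap {X S : Type*} [SemilatticeSup S] [OrderBot S]
    {n : ℕ} {δ : X → X → S} (hδ : IsSDistance δ) (hV : VConditionType n δ) {c d : S}
    {x y : X} (h : relChainComp (altRel (fun u v => δ u v ≤ c) (fun u v => δ u v ≤ d)) n x y) :
    relChainComp (altRel (fun u v => δ u v ≤ d) (fun u v => δ u v ≤ c)) n x y := by
  have hxy : δ x y ≤ c ⊔ d := le_of_relChainComp hδ.2.2 (fun _ _ _ => altRel_le_sup) n h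
  exact relChainComp_altRel_of_vCondition hV (sup_comm c d ▸ hxy)

theorem phi_range_permutable_general {X : Type*} {S : Type*} [SemilatticeSup S] [OrderBot S]
    (n : ℕ) (δ : X → X → S) (hδ : IsSDistance δ)
    (hV : VConditionType n δ) (a b : S) :
    ∀ x y : X,
      relChainComp (altRel (fun u v : X => δ u v ≤ a) (fun u v : X => δ u v ≤ b)) n x y ↔
      relChainComp (altRel (fun u v : X => δ u v ≤ b) (fun u v : X => δ u v ≤ a)) n x y :=
  fun _ _ => ⟨relChainComp_altRel_swap hδ hV, relChainComp_altRel_swap hδ hV⟩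

/-- If `δ` is a V-distance of type `n` (`n` positive), then any two equivalence
relations `φ(a)`, `φ(b)` in the range of `φ` are `(n+1)`-permutable:
`γ_0γ_1⋯γ_n = γ_1γ_2⋯γ_{n+1}` where `γ_k = φ(a)` for even `k` and `φ(b)` for
odd `k`. -/
theorem phi_range_permutable {X : Type*} {S : Type*} [SemilatticeSup S] [OrderBot S]
    (n : ℕ) (hn : 0 < n) (δ : X → X → S) (hδ : IsSDistance δ)
    (hV : VConditionType n δ) (a b : S) :
    ∀ x y : X,
      relChainComp (altRel (fun u v : X => δ u v ≤ a) (fun u v : X => δ u v ≤ b)) n x y ↔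
      relChainComp (altRel (fun u v : X => δ u v ≤ b) (fun u v : X => δ u v ≤ a)) n x y :=
  phi_range_permutable_general n δ hδ hV a b
end

section
/- For a module M over a ring R, the map δ : M × M → Sub_c(M) given by δ(x,y) = (x−y)R, the cyclic submodule generated by x−y, is a V-distance of type 1 whose range join-generates the semilattice Sub_c(M) of finitely generated submodules of M. -/
open Submodule in
private lemma span_finset_eq_sup {R M : Type*} [Ring R] [AddCommGroup M] [Module R M]
    (s : Finset M) : span R (s : Set M) = s.sup fun x => span R {x} := by
  classical
  induction s using Finset.induction_on with
  | empty => simp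
  | insert _ _ h ih => simp [Submodule.span_insert, ih]

/-- For a module `M` over a ring `R`, the map `δ(x,y) = span {x - y}` (the
cyclic submodule generated by `x - y`) is a V-distance of type 1 on `M` whose
range join-generates the semilattice of finitely generated submodules. -/
theorem span_sub_Vdistance_type_one (R : Type*) (M : Type*) [Ring R]
    [AddCommGroup M] [Module R M] :
    -- δ is a distance:
    (∀ x : M, Submodule.span R {x - x} = (⊥ : Submodule R M)) ∧
    (∀ x y : M, Submodule.span R {x - y} = Submodule.span R {y - x}) ∧
    (∀ x y z : M,
      Submodule.span R {x - z} ≤ Submodule.span R {x - y} ⊔ Submodule.span R {y - z}) ∧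
    -- δ satisfies the V-condition of type 1:
    (∀ x y : M, ∀ a b : Submodule R M, a.FG → b.FG →
      Submodule.span R {x - y} ≤ a ⊔ b →
      ∃ z : M, Submodule.span R {x - z} ≤ a ∧ Submodule.span R {z - y} ≤ b) ∧
    -- the range of δ join-generates Sub_c M:
    (∀ N : Submodule R M, N.FG →
      ∃ t : Finset (M × M), N = t.sup fun p => Submodule.span R {p.1 - p.2}) := by
  classical
  refine ⟨fun x => by simp, fun x y => ?_, fun x y z => ?_, fun x y a b _ _ h => ?_, ?_⟩
  · have : ({y - x} : Set M) = -{x - y} := by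
      ext m; simp [Set.mem_neg, neg_sub, eq_comm]
    rw [this, Submodule.span_neg]
  · rw [Submodule.span_le]
    rintro _ rfl
    have hxz : x - z = (x - y) + (y - z) := by abel
    rw [hxz]
    exact Submodule.add_mem _
      (Submodule.mem_sup_left (Submodule.subset_span rfl))
      (Submodule.mem_sup_right (Submodule.subset_span rfl))
  · have hxy : x - y ∈ a ⊔ b := h (Submodule.subset_span rfl)
    rw [Submodule.mem_sup] at hxy
    obtain ⟨u, hu, v, hv, huv⟩ := hxy
    refine ⟨x - u, ?_, ?_⟩
    · rw [Submodule.span_le]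
      rintro _ rfl
      simpa using hu
    · rw [Submodule.span_le]
      rintro _ rfl
      have hv2 : v = (x - y) - u := by rw [← huv]; abel
      have hv' : x - u - y = v := by rw [hv2]; abel
      rwa [hv']
  · intro N hN
    obtain ⟨s, rfl⟩ := hN
    refine ⟨s.image fun x => (x, (0 : M)), ?_⟩
    rw [Finset.sup_image, span_finset_eq_sup]
    exact Finset.sup_congr rfl fun x _ => by simp
end

section
/- For a group G, the map δ : G × G → NSub_c(G) sending (x,y) to the normal subgroup generated by xy⁻¹ is a V-distance of type 1 whose range join-generates the semilattice NSub_c(G) of finitely generated normal subgroups of G. -/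
open Pointwise

/-- A finitely generated normal subgroup: a normal subgroup generated, as a
normal subgroup, by finitely many elements. -/
def FGNormal {G : Type*} [Group G] (N : Subgroup G) : Prop :=
  N.Normal ∧ ∃ s : Finset G, N = Subgroup.normalClosure (s : Set G)

theorem normalClosure_inv_aux {G : Type*} [Group G] (x y : G) :
    Subgroup.normalClosure {x * y⁻¹} ≤ Subgroup.normalClosure {y * x⁻¹} := by
  have : (y * x⁻¹ : G) ∈ Subgroup.normalClosure {y * x⁻¹} :=
    Subgroup.subset_normalClosure rfl
  apply Subgroup.normalClosure_le_normal
  intro g hg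
  rcases hg with rfl
  have := (Subgroup.normalClosure {y * x⁻¹}).inv_mem this
  simpa using this

theorem sup_normalClosure_normal {G : Type*} [Group G] {ι : Type*} (s : Finset ι)
    (f : ι → Set G) : (s.sup fun i => Subgroup.normalClosure (f i)).Normal := by
  classical
  induction s using Finset.induction with
  | empty => simpa using (inferInstance : (⊥ : Subgroup G).Normal)
  | insert _ _ h ih =>
    rw [Finset.sup_insert]
    exact @Subgroup.sup_normal G _ _ _ Subgroup.normalClosure_normal ih

/-- For a group `G`, the map `δ(x,y) = ⟨⟨x y⁻¹⟩⟩` (the normal subgroup generated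
by `x y⁻¹`) is a V-distance of type 1 on `G` whose range join-generates the
semilattice of finitely generated normal subgroups of `G`. -/
theorem normalClosure_Vdistance_type_one (G : Type*) [Group G] :
    -- δ is a distance:
    (∀ x : G, Subgroup.normalClosure {x * x⁻¹} = (⊥ : Subgroup G)) ∧
    (∀ x y : G, Subgroup.normalClosure {x * y⁻¹} = Subgroup.normalClosure {y * x⁻¹}) ∧
    (∀ x y z : G, Subgroup.normalClosure {x * z⁻¹} ≤
      Subgroup.normalClosure {x * y⁻¹} ⊔ Subgroup.normalClosure {y * z⁻¹}) ∧
    -- δ satisfies the V-condition of type 1: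
    (∀ x y : G, ∀ a b : Subgroup G, FGNormal a → FGNormal b →
      Subgroup.normalClosure {x * y⁻¹} ≤ a ⊔ b →
      ∃ z : G, Subgroup.normalClosure {x * z⁻¹} ≤ a ∧
        Subgroup.normalClosure {z * y⁻¹} ≤ b) ∧
    -- the range of δ join-generates NSub_c G:
    (∀ N : Subgroup G, FGNormal N →
      ∃ t : Finset (G × G), N = t.sup fun p => Subgroup.normalClosure {p.1 * p.2⁻¹}) := by
  classical
  refine ⟨?_, ?_, ?_, ?_, ?_⟩
  · intro x
    refine le_antisymm ?_ bot_le
    apply Subgroup.normalClosure_le_normal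
    simp
  · intro x y
    exact le_antisymm (normalClosure_inv_aux x y) (normalClosure_inv_aux y x)
  · intro x y z
    apply Subgroup.normalClosure_le_normal
    intro g hg
    rcases hg with rfl
    have h1 : (x * y⁻¹ : G) ∈ Subgroup.normalClosure {x * y⁻¹} ⊔ Subgroup.normalClosure {y * z⁻¹} :=
      Subgroup.mem_sup_left (Subgroup.subset_normalClosure rfl)
    have h2 : (y * z⁻¹ : G) ∈ Subgroup.normalClosure {x * y⁻¹} ⊔ Subgroup.normalClosure {y * z⁻¹} :=
      Subgroup.mem_sup_right (Subgroup.subset_normalClosure rfl)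
    have := mul_mem h1 h2
    simpa [mul_assoc] using this
  · intro x y a b ha hb h
    have haN := ha.1
    have hbN := hb.1
    have hxy : (x * y⁻¹ : G) ∈ a ⊔ b := h (Subgroup.subset_normalClosure rfl)
    have : (x * y⁻¹ : G) ∈ (a : Set G) * (b : Set G) := by
      rw [← Subgroup.mul_normal a b]
      exact hxy
    rcases this with ⟨α, hα, β, hβ, hαβ⟩
    refine ⟨α⁻¹ * x, ?_, ?_⟩
    · apply Subgroup.normalClosure_le_normal
      intro g hg; rcases hg with rfl
      simpa [mul_assoc] using hα
    · apply Subgroup.normalClosure_le_normal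
      intro g hg; rcases hg with rfl
      change α * β = x * y⁻¹ at hαβ
      have : α⁻¹ * x * y⁻¹ = β := by
        rw [mul_assoc, ← hαβ]; group
      rw [this]; exact hβ
  · intro N hN
    rcases hN.2 with ⟨s, rfl⟩
    refine ⟨s.image fun g => (g, 1), ?_⟩
    rw [Finset.sup_image]
    apply le_antisymm
    · haveI : ((s.sup ((fun p => Subgroup.normalClosure {p.1 * p.2⁻¹}) ∘ fun g => (g, (1:G))))).Normal :=
        sup_normalClosure_normal s (fun g => {g * (1:G)⁻¹})
      apply Subgroup.normalClosure_le_normal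
      intro g hg
      have : Subgroup.normalClosure {g * (1:G)⁻¹} ≤
          s.sup fun g => Subgroup.normalClosure {((g, (1:G)).1 * (g, (1:G)).2⁻¹)} :=
        Finset.le_sup (f := fun g => Subgroup.normalClosure {(g * (1:G)⁻¹)}) hg
      apply this
      apply Subgroup.subset_normalClosure
      simp
    · apply Finset.sup_le
      intro g hg
      apply Subgroup.normalClosure_le_normal
      intro e he
      simp only [Set.mem_singleton_iff] at he
      subst he
      apply Subgroup.subset_normalClosure
      simpa using hg
end

section
/- Let S and T be join-semilattices with zero, let μ : S → T be a weakly distributive join-homomorphism preserving zero, and let e ∈ S. If S satisfies WURP=(e), then T satisfies WURP=(μ(e)). -/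
universe u

/-- `S` satisfies `WURP⁼(e)` with witness `m`: for all families `(a i)`, `(b i)`
with `e ≤ a i ⊔ b i`, there are `m` subsets covering the index set and elements
`c i j` satisfying the refinement conditions. -/
def WURPeqWith {S : Type*} [SemilatticeSup S] [OrderBot S] (m : ℕ) (e : S) : Prop :=
  ∀ (I : Type u) (a b : I → S), (∀ i, e ≤ a i ⊔ b i) →
    ∃ (J : Fin m → Set I) (c : I → I → S),
      (∀ i : I, ∃ u : Fin m, i ∈ J u) ∧
      (∀ u : Fin m, ∀ i ∈ J u, ∀ j ∈ J u,
        c i j ≤ a i ⊔ a j ∧ c i j ≤ b i ⊔ b j ∧ e ≤ a j ⊔ b i ⊔ c i j) ∧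
      (∀ i j k : I, c i k ≤ c i j ⊔ c j k)

/-- `S` satisfies `WURP⁼(e)`. -/
def WURPeq {S : Type*} [SemilatticeSup S] [OrderBot S] (e : S) : Prop :=
  ∃ m : ℕ, 0 < m ∧ WURPeqWith.{u} m e

/-!
Weak distributivity lifts each `μ e ≤ a i ⊔ b i` to `e ≤ x i ⊔ y i` with `μ (x i) ≤ a i` and
`μ (y i) ≤ b i`. Applying `WURP⁼(e)` to `(x i)`, `(y i)` yields subsets `J u` and elements `c i j`;
the same subsets with `μ (c i j)` witness `WURP⁼(μ e)`, because the monotone join-homomorphism `μ`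
carries every required inequality over.
-/

def SupHom.IsWeaklyDistributive {S T : Type*} [SemilatticeSup S] [SemilatticeSup T]
    (μ : SupHom S T) : Prop :=
  ∀ (c : S) (a b : T), μ c ≤ a ⊔ b → ∃ x y : S, c ≤ x ⊔ y ∧ μ x ≤ a ∧ μ y ≤ b

theorem WURPeqWith.map {S T : Type*} [SemilatticeSup S] [OrderBot S] [SemilatticeSup T]
    [OrderBot T] {μ : SupHom S T} (hμ : μ.IsWeaklyDistributive) {m : ℕ} {e : S}
    (he : WURPeqWith.{u} m e) : WURPeqWith.{u} m (μ e) := by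
  intro I a b hab
  choose x y hxy hx hy using fun i => hμ e (a i) (b i) (hab i)
  obtain ⟨J, c, hcover, hrefine, htrans⟩ := he I x y hxy
  refine ⟨J, fun i j => μ (c i j), hcover, fun u i hi j hj => ?_, fun i j k => ?_⟩
  · obtain ⟨hca, hcb, hec⟩ := hrefine u i hi j hj
    refine ⟨?_, ?_, ?_⟩
    · calc μ (c i j) ≤ μ (x i ⊔ x j) := OrderHomClass.monotone μ hca
        _ = μ (x i) ⊔ μ (x j) := map_sup μ _ _
        _ ≤ a i ⊔ a j := sup_le_sup (hx i) (hx j)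
    · calc μ (c i j) ≤ μ (y i ⊔ y j) := OrderHomClass.monotone μ hcb
        _ = μ (y i) ⊔ μ (y j) := map_sup μ _ _
        _ ≤ b i ⊔ b j := sup_le_sup (hy i) (hy j)
    · calc μ e ≤ μ (x j ⊔ y i ⊔ c i j) := OrderHomClass.monotone μ hec
        _ = μ (x j) ⊔ μ (y i) ⊔ μ (c i j) := by rw [map_sup, map_sup]
        _ ≤ a j ⊔ b i ⊔ μ (c i j) := sup_le_sup_right (sup_le_sup (hx j) (hy i)) _
  · calc μ (c i k) ≤ μ (c i j ⊔ c j k) := OrderHomClass.monotone μ (htrans i j k)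
      _ = μ (c i j) ⊔ μ (c j k) := map_sup μ _ _

theorem WURPeq.map {S T : Type*} [SemilatticeSup S] [OrderBot S] [SemilatticeSup T]
    [OrderBot T] {μ : SupHom S T} (hμ : μ.IsWeaklyDistributive) {e : S}
    (he : WURPeq.{u} e) : WURPeq.{u} (μ e) :=
  let ⟨m, hm, hW⟩ := he
  ⟨m, hm, hW.map hμ⟩

theorem wurp_of_weakly_distributive_general {S T : Type*} [SemilatticeSup S] [OrderBot S]
    [SemilatticeSup T] [OrderBot T] (μ : S → T)
    (hjoin : ∀ x y : S, μ (x ⊔ y) = μ x ⊔ μ y)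
    (hwd : ∀ (c : S) (a b : T), μ c ≤ a ⊔ b →
      ∃ x y : S, c ≤ x ⊔ y ∧ μ x ≤ a ∧ μ y ≤ b)
    (e : S) (he : WURPeq.{u} e) : WURPeq.{u} (μ e) := by
  exact he.map (μ := ⟨μ, hjoin⟩) hwd

/-- If `μ : S → T` is a weakly distributive join-homomorphism preserving zero
and `S` satisfies `WURP⁼(e)`, then `T` satisfies `WURP⁼(μ(e))`. -/
theorem wurp_of_weakly_distributive {S T : Type*} [SemilatticeSup S] [OrderBot S]
    [SemilatticeSup T] [OrderBot T] (μ : S → T)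
    (hjoin : ∀ x y : S, μ (x ⊔ y) = μ x ⊔ μ y) (hbot : μ ⊥ = ⊥)
    (hwd : ∀ (c : S) (a b : T), μ c ≤ a ⊔ b →
      ∃ x y : S, c ≤ x ⊔ y ∧ μ x ≤ a ∧ μ y ≤ b)
    (e : S) (he : WURPeq.{u} e) : WURPeq.{u} (μ e) :=
  wurp_of_weakly_distributive_general μ hjoin hwd e he
end

section
/- Let S be a join-semilattice with zero and let δ : X × X → S be a V-distance of type 3/2 whose range join-generates S. Then S satisfies WURP=(e) for every e ∈ S; moreover, if e = ⋁_{ℓ<n} δ(x_ℓ, y_ℓ), then m = 2^n witnesses WURP=(e). -/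
universe u

/-- The V-condition of type 3/2. -/
def VConditionThreeHalves {X : Type*} {S : Type*} [SemilatticeSup S] [OrderBot S]
    (δ : X → X → S) : Prop :=
  ∀ x y : X, ∀ a b : S, δ x y ≤ a ⊔ b →
    ∃ z : X, (δ x z ≤ a ∧ δ z y ≤ b) ∨ (δ x z ≤ b ∧ δ z y ≤ a)

/-!
Choose, for every index `i` and every pair `(x ℓ, y ℓ)` making up `e`, a point `z i ℓ` splitting
`δ (x ℓ) (y ℓ)` along `a i, b i` as the V-condition provides. Two indices fall into the same block
when their splittings are oriented the same way at every `ℓ`, which leaves `2 ^ n` blocks, and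
`c i j := ⋁ ℓ, δ (z i ℓ) (z j ℓ)` satisfies the triangle inequality because it is a distance
on `X ^ n`. Inside a block the required bounds on `c` come from the triangle inequality of `δ`
through `x ℓ`, `y ℓ` and `z i ℓ`, `z j ℓ`.
-/

namespace IsSDistance

variable {X S : Type*} [SemilatticeSup S] [OrderBot S] {δ : X → X → S}

theorem comm (hδ : IsSDistance δ) (x y : X) : δ x y = δ y x :=
  hδ.2.1 x y

theorem triangle (hδ : IsSDistance δ) (x y z : X) : δ x z ≤ δ x y ⊔ δ y z :=
  hδ.2.2 x y z

theorem finsetSup {ι : Type*} (hδ : IsSDistance δ) (s : Finset ι) :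
    IsSDistance fun f g : ι → X => s.sup fun ℓ => δ (f ℓ) (g ℓ) := by
  refine ⟨fun f => ?_, fun f g => ?_, fun f g h => ?_⟩
  · simp only [hδ.1, Finset.sup_bot]
  · simp only [hδ.comm (f _)]
  · rw [← Finset.sup_sup]
    exact Finset.sup_mono_fun fun ℓ _ => hδ.triangle _ _ _

theorem bounds_of_splits (hδ : IsSDistance δ) {x y z w : X} {a b a' b' : S}
    (hxz : δ x z ≤ a) (hzy : δ z y ≤ b) (hxw : δ x w ≤ a') (hwy : δ w y ≤ b') :
    δ z w ≤ a ⊔ a' ∧ δ z w ≤ b ⊔ b' ∧ δ x y ≤ a' ⊔ b ⊔ δ z w := by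
  refine ⟨?_, ?_, ?_⟩
  · calc δ z w ≤ δ z x ⊔ δ x w := hδ.triangle _ _ _
      _ ≤ a ⊔ a' := sup_le_sup (hδ.comm z x ▸ hxz) hxw
  · calc δ z w ≤ δ z y ⊔ δ y w := hδ.triangle _ _ _
      _ ≤ b ⊔ b' := sup_le_sup hzy (hδ.comm y w ▸ hwy)
  · calc δ x y ≤ δ x w ⊔ δ w y := hδ.triangle _ _ _
      _ ≤ δ x w ⊔ (δ w z ⊔ δ z y) := sup_le_sup_left (hδ.triangle _ _ _) _
      _ ≤ a' ⊔ (δ z w ⊔ b) := sup_le_sup hxw (hδ.comm w z ▸ sup_le_sup_left hzy _)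
      _ = a' ⊔ b ⊔ δ z w := by ac_rfl

theorem bounds_of_splits_or (hδ : IsSDistance δ) {x y z w : X} {a b a' b' : S}
    (h : (δ x z ≤ a ∧ δ z y ≤ b ∧ δ x w ≤ a' ∧ δ w y ≤ b') ∨
      (δ x z ≤ b ∧ δ z y ≤ a ∧ δ x w ≤ b' ∧ δ w y ≤ a')) :
    δ z w ≤ a ⊔ a' ∧ δ z w ≤ b ⊔ b' ∧ δ x y ≤ a' ⊔ b ⊔ δ z w := by
  rcases h with ⟨hxz, hzy, hxw, hwy⟩ | ⟨hxz, hzy, hxw, hwy⟩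
  · exact hδ.bounds_of_splits hxz hzy hxw hwy
  · rw [hδ.comm x y]
    exact hδ.bounds_of_splits (hδ.comm z y ▸ hzy) (hδ.comm x z ▸ hxz)
      (hδ.comm w y ▸ hwy) (hδ.comm x w ▸ hxw)

theorem wurpEqWith_two_pow_card {ι : Type*} [Fintype ι] (hδ : IsSDistance δ)
    (hV : VConditionThreeHalves δ) (x y : ι → X) :
    WURPeqWith.{u} (2 ^ Fintype.card ι) (Finset.univ.sup fun ℓ => δ (x ℓ) (y ℓ)) := by
  classical
  intro I a b hab
  have hsplit : ∀ i ℓ, ∃ z, (δ (x ℓ) z ≤ a i ∧ δ z (y ℓ) ≤ b i) ∨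
      (δ (x ℓ) z ≤ b i ∧ δ z (y ℓ) ≤ a i) :=
    fun i ℓ => hV _ _ _ _ ((Finset.le_sup (Finset.mem_univ ℓ)).trans (hab i))
  choose z hz using hsplit
  let T : I → Set ι := fun i => {ℓ | δ (x ℓ) (z i ℓ) ≤ a i ∧ δ (z i ℓ) (y ℓ) ≤ b i}
  let E : Set ι ≃ Fin (2 ^ Fintype.card ι) := Fintype.equivFinOfCardEq Fintype.card_set
  refine ⟨fun u => {i | E (T i) = u}, fun i j => Finset.univ.sup fun ℓ => δ (z i ℓ) (z j ℓ),
    fun i => ⟨_, rfl⟩, ?_, fun i j k => (hδ.finsetSup _).triangle (z i) (z j) (z k)⟩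
  rintro u i (hi : E (T i) = u) j (hj : E (T j) = u)
  have hT : T i = T j := E.injective (hi.trans hj.symm)
  have hcoord : ∀ ℓ, δ (z i ℓ) (z j ℓ) ≤ a i ⊔ a j ∧ δ (z i ℓ) (z j ℓ) ≤ b i ⊔ b j ∧
      δ (x ℓ) (y ℓ) ≤ a j ⊔ b i ⊔ δ (z i ℓ) (z j ℓ) := by
    intro ℓ
    apply hδ.bounds_of_splits_or
    by_cases hℓ : ℓ ∈ T i
    · have hℓ' : ℓ ∈ T j := hT ▸ hℓ
      exact Or.inl ⟨hℓ.1, hℓ.2, hℓ'.1, hℓ'.2⟩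
    · have hℓ' : ℓ ∉ T j := hT ▸ hℓ
      obtain ⟨hxi, hiy⟩ := (hz i ℓ).resolve_left hℓ
      obtain ⟨hxj, hjy⟩ := (hz j ℓ).resolve_left hℓ'
      exact Or.inr ⟨hxi, hiy, hxj, hjy⟩
  exact ⟨Finset.sup_le fun ℓ _ => (hcoord ℓ).1, Finset.sup_le fun ℓ _ => (hcoord ℓ).2.1,
    Finset.sup_le fun ℓ _ => (hcoord ℓ).2.2.trans
      (sup_le_sup_left (Finset.le_sup (f := fun ℓ => δ (z i ℓ) (z j ℓ)) (Finset.mem_univ ℓ)) _)⟩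

end IsSDistance

/-- If `δ : X × X → S` is a V-distance of type 3/2 whose range join-generates
`S`, then `S` satisfies `WURP⁼(e)` for every `e ∈ S`; moreover, if
`e = ⋁_{ℓ<n} δ(x ℓ, y ℓ)`, then `m = 2 ^ n` is a witness. -/
theorem wurp_of_type_three_halves {X : Type*} {S : Type*} [SemilatticeSup S]
    [OrderBot S] (δ : X → X → S) (hδ : IsSDistance δ)
    (hV : VConditionThreeHalves δ)
    (hgen : ∀ s : S, ∃ t : Finset (X × X), s = t.sup fun p => δ p.1 p.2) :
    (∀ e : S, WURPeq.{u} e) ∧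
    (∀ (n : ℕ) (x y : Fin n → X),
      WURPeqWith.{u} (2 ^ n) (Finset.univ.sup fun ℓ => δ (x ℓ) (y ℓ))) := by
  refine ⟨fun e => ?_, fun n x y => by simpa using hδ.wurpEqWith_two_pow_card hV x y⟩
  obtain ⟨t, rfl⟩ := hgen e
  have h := hδ.wurpEqWith_two_pow_card.{u} hV (fun p : t => p.1.1) (fun p : t => p.1.2)
  rw [Finset.univ_eq_attach, Finset.sup_attach t fun p => δ p.1 p.2, Fintype.card_coe] at h
  exact ⟨_, Nat.two_pow_pos _, h⟩
end

section
/- Let S be a join-semilattice with zero and let δ : X × X → S be a V-distance of type 1 whose range join-generates S. Then S satisfies WURP=(e) with witness m = 1, for every e ∈ S. -/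
universe u

/-- The V-condition of type 1. -/
def VConditionTypeOne {X : Type*} {S : Type*} [SemilatticeSup S] [OrderBot S]
    (δ : X → X → S) : Prop :=
  ∀ x y : X, ∀ a b : S, δ x y ≤ a ⊔ b → ∃ z : X, δ x z ≤ a ∧ δ z y ≤ b

/-!
Write `e` as the join of `δ` over a finite set `T` of pairs. On functions `X × X → X`, the
join over `T` of the pointwise distances is again a distance of type 1, and in it `e` is the
distance from `Prod.fst` to `Prod.snd`. Splitting that distance at `a i ⊔ b i` gives a midpoint
`z i` for every `i`, and `c i j` is the distance from `z i` to `z j`; all required inequalities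
are then instances of the triangle inequality.
-/

section

variable {ι X S : Type*} [SemilatticeSup S] [OrderBot S] {δ : X → X → S}

theorem IsSDistance.symm (hδ : IsSDistance δ) (x y : X) : δ x y = δ y x :=
  hδ.2.1 x y

theorem IsSDistance.triangle_s10 (hδ : IsSDistance δ) (x y z : X) : δ x z ≤ δ x y ⊔ δ y z :=
  hδ.2.2 x y z

theorem IsSDistance.le_sup_of_le {x y z : X} {a b : S} (hδ : IsSDistance δ)
    (hxy : δ x y ≤ a) (hyz : δ y z ≤ b) : δ x z ≤ a ⊔ b :=
  (hδ.triangle_s10 x y z).trans (sup_le_sup hxy hyz)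

def finsetSupDist (δ : X → X → S) (T : Finset ι) (f g : ι → X) : S :=
  T.sup fun p => δ (f p) (g p)

theorem IsSDistance.finsetSupDist (hδ : IsSDistance δ) (T : Finset ι) :
    IsSDistance (finsetSupDist δ T) := by
  refine ⟨fun f => ?_, fun f g => ?_, fun f g h => Finset.sup_le fun p hp => ?_⟩
  · simp only [_root_.finsetSupDist, hδ.1, Finset.sup_bot]
  · simp only [_root_.finsetSupDist, hδ.symm]
  · exact hδ.le_sup_of_le (Finset.le_sup (f := fun p => δ (f p) (g p)) hp)
      (Finset.le_sup (f := fun p => δ (g p) (h p)) hp)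

theorem VConditionTypeOne.finsetSupDist (hV : VConditionTypeOne δ) (T : Finset ι) :
    VConditionTypeOne (finsetSupDist δ T) := by
  intro f g a b hfg
  have hmid : ∀ p, ∃ z, p ∈ T → δ (f p) z ≤ a ∧ δ z (g p) ≤ b := by
    intro p
    by_cases hp : p ∈ T
    · obtain ⟨z, hz⟩ := hV _ _ a b (Finset.sup_le_iff.mp hfg p hp)
      exact ⟨z, fun _ => hz⟩
    · exact ⟨f p, fun hp' => absurd hp' hp⟩
  choose z hz using hmid
  exact ⟨z, Finset.sup_le fun p hp => (hz p hp).1, Finset.sup_le fun p hp => (hz p hp).2⟩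

end

/-- If `δ : X × X → S` is a V-distance of type 1 whose range join-generates
`S`, then `S` satisfies `WURP⁼(e)` with witness `m = 1`, for every `e ∈ S`. -/
theorem wurp_one_of_type_one {X : Type*} {S : Type*} [SemilatticeSup S]
    [OrderBot S] (δ : X → X → S) (hδ : IsSDistance δ) (hV : VConditionTypeOne δ)
    (hgen : ∀ s : S, ∃ t : Finset (X × X), s = t.sup fun p => δ p.1 p.2) :
    ∀ e : S, WURPeqWith.{u} 1 e := by
  intro e I a b hab
  obtain ⟨T, hT⟩ := hgen e
  set D := finsetSupDist δ T
  have hD : IsSDistance D := hδ.finsetSupDist T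
  have he : e = D Prod.fst Prod.snd := hT
  choose z hza hzb using fun i => hV.finsetSupDist T _ _ (a i) (b i) (he ▸ hab i)
  refine ⟨fun _ => Set.univ, fun i j => D (z i) (z j), fun _ => ⟨0, trivial⟩,
    fun _ i _ j _ => ⟨?_, ?_, ?_⟩, fun i j k => hD.triangle_s10 _ _ _⟩
  · exact hD.le_sup_of_le ((hD.symm _ _).trans_le (hza i)) (hza j)
  · exact hD.le_sup_of_le (hzb i) ((hD.symm _ _).trans_le (hzb j))
  · calc e = D Prod.fst Prod.snd := he
      _ ≤ a j ⊔ (D (z j) (z i) ⊔ b i) :=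
          hD.le_sup_of_le (hza j) (hD.le_sup_of_le le_rfl (hzb i))
      _ = a j ⊔ b i ⊔ D (z i) (z j) := by rw [hD.symm (z j)]; ac_rfl
end

section
/- Let S be a distributive join-semilattice with zero and let δ : X × X → S be a surjective S-valued distance. Given x, y ∈ X and a', b' ∈ S with δ(x,y) = a' ∨ b', let X' = X ∪ {u, v} with two new points, and extend δ to δ' : X' × X' → S by δ'(z,u) = δ(z,x) ∨ a', δ'(z,v) = δ(z,y) ∨ a' for z ∈ X, and δ'(u,v) = b'. Then δ' is an S-valued distance on X' extending δ, with δ'(x,u) = a', δ'(u,v) = b', δ'(v,y) = a'. -/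
/-- A join-semilattice with zero is distributive if whenever `c ≤ a ⊔ b` there
are `a' ≤ a` and `b' ≤ b` with `c = a' ⊔ b'`. -/
def IsDistribSemilattice (S : Type*) [SemilatticeSup S] [OrderBot S] : Prop :=
  ∀ a b c : S, c ≤ a ⊔ b → ∃ a' b' : S, a' ≤ a ∧ b' ≤ b ∧ c = a' ⊔ b'

/-- The extension of `δ` to `X' = X ∪ {u, v}` (here `u = Sum.inr false`,
`v = Sum.inr true`), defined by `δ'(z,u) = δ(z,x) ⊔ a'`, `δ'(z,v) = δ(z,y) ⊔ a'`
for `z ∈ X`, and `δ'(u,v) = b'`. -/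
def extDistance {X : Type*} {S : Type*} [SemilatticeSup S] [OrderBot S]
    (δ : X → X → S) (x y : X) (a' b' : S) : X ⊕ Bool → X ⊕ Bool → S
  | Sum.inl p, Sum.inl q => δ p q
  | Sum.inl p, Sum.inr false => δ p x ⊔ a'
  | Sum.inr false, Sum.inl p => δ p x ⊔ a'
  | Sum.inl p, Sum.inr true => δ p y ⊔ a'
  | Sum.inr true, Sum.inl p => δ p y ⊔ a'
  | Sum.inr false, Sum.inr true => b'
  | Sum.inr true, Sum.inr false => b'
  | Sum.inr false, Sum.inr false => ⊥
  | Sum.inr true, Sum.inr true => ⊥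

/-! The extension is an instance of a general gluing: a space `(Y, ε)` is attached to `(X, δ)`
along a map `π : Y → X`, every new point `w` lying at distance `a` above its base point `π w`.
This is a distance as soon as `ε w w' ≤ δ (π w) (π w') ≤ ε w w' ⊔ a`; for the two new points
`u ↦ x`, `v ↦ y` at mutual distance `b'`, both bounds come from `δ x y = a' ⊔ b'`. -/

section Glue

variable {X Y S : Type*} [SemilatticeSup S] [OrderBot S]

def discreteDistance [DecidableEq Y] (b : S) (w w' : Y) : S :=
  if w = w' then ⊥ else b

theorem isSDistance_discreteDistance [DecidableEq Y] (b : S) :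
    IsSDistance (discreteDistance (Y := Y) b) := by
  refine ⟨fun w => if_pos rfl, fun w w' => ?_, fun w r w' => ?_⟩
  · simp only [discreteDistance, eq_comm]
  · unfold discreteDistance
    split_ifs <;> simp_all

def glueDistance (δ : X → X → S) (ε : Y → Y → S) (π : Y → X) (a : S) : X ⊕ Y → X ⊕ Y → S
  | .inl p, .inl q => δ p q
  | .inl p, .inr w => δ p (π w) ⊔ a
  | .inr w, .inl p => δ p (π w) ⊔ a
  | .inr w, .inr w' => ε w w'

theorem isSDistance_glueDistance {δ : X → X → S} {ε : Y → Y → S} {π : Y → X} {a : S}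
    (hδ : IsSDistance δ) (hε : IsSDistance ε) (hle : ∀ w w', ε w w' ≤ δ (π w) (π w'))
    (hge : ∀ w w', δ (π w) (π w') ≤ ε w w' ⊔ a) : IsSDistance (glueDistance δ ε π a) := by
  obtain ⟨hδ0, hδsymm, hδtri⟩ := hδ
  obtain ⟨hε0, hεsymm, hεtri⟩ := hε
  refine ⟨?_, ?_, ?_⟩
  · rintro (p | w)
    exacts [hδ0 p, hε0 w]
  · rintro (p | w) (q | w')
    exacts [hδsymm p q, rfl, rfl, hεsymm w w']
  · rintro (p | w) (q | w') (r | w'') <;> simp only [glueDistance]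
    · exact hδtri p q r
    · have := hδtri p q (π w''); order
    · have := hδtri p (π w') r; rw [hδsymm (π w') r] at this; order
    · have := hδtri p (π w') (π w''); have := hge w' w''; order
    · have := hδtri r q (π w); rw [hδsymm r q] at this; order
    · have := hle w w''; have := hδtri (π w) q (π w''); rw [hδsymm (π w) q] at this; order
    · have := hδtri r (π w') (π w); have := hge w' w; rw [hεsymm w' w] at this; order
    · exact hεtri w w' w''

end Glue

theorem extDistance_is_distance_general {X : Type*} {S : Type*} [SemilatticeSup S]
    [OrderBot S] (δ : X → X → S) (hδ : IsSDistance δ) (x y : X) (a' b' : S)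
    (hab : δ x y = a' ⊔ b') :
    IsSDistance (extDistance δ x y a' b') ∧
    (∀ p q : X, extDistance δ x y a' b' (Sum.inl p) (Sum.inl q) = δ p q) ∧
    extDistance δ x y a' b' (Sum.inl x) (Sum.inr false) = a' ∧
    extDistance δ x y a' b' (Sum.inr false) (Sum.inr true) = b' ∧
    extDistance δ x y a' b' (Sum.inr true) (Sum.inl y) = a' := by
  have hglue : extDistance δ x y a' b' =
      glueDistance δ (discreteDistance b') (cond · y x) a' := by
    funext s t
    rcases s with p | _ | _ <;> rcases t with q | _ | _ <;> rfl
  have hle : ∀ w w', discreteDistance b' w w' ≤ δ (cond w y x) (cond w' y x) := by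
    have : b' ≤ δ x y := hab ▸ le_sup_right
    rintro (_ | _) (_ | _) <;> simp [discreteDistance, this, hδ.2.1 y x]
  have hge : ∀ w w', δ (cond w y x) (cond w' y x) ≤ discreteDistance b' w w' ⊔ a' := by
    rintro (_ | _) (_ | _) <;> simp [discreteDistance, hδ.1, hδ.2.1 y x, hab]
  refine ⟨hglue ▸ isSDistance_glueDistance hδ (isSDistance_discreteDistance b') hle hge,
    fun _ _ => rfl, ?_, rfl, ?_⟩ <;> simp [extDistance, hδ.1]

/-- Given a surjective `S`-valued distance `δ` on `X` over a distributive
join-semilattice `S` with zero, and `x, y ∈ X`, `a', b' ∈ S` with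
`δ(x,y) = a' ⊔ b'`, the extension `δ'` to `X' = X ∪ {u,v}` is an `S`-valued
distance extending `δ`, with `δ'(x,u) = a'`, `δ'(u,v) = b'`, `δ'(v,y) = a'`. -/
theorem extDistance_is_distance {X : Type*} {S : Type*} [SemilatticeSup S]
    [OrderBot S] (hS : IsDistribSemilattice S) (δ : X → X → S)
    (hδ : IsSDistance δ) (hsurj : Function.Surjective fun p : X × X => δ p.1 p.2)
    (x y : X) (a' b' : S) (hab : δ x y = a' ⊔ b') :
    IsSDistance (extDistance δ x y a' b') ∧
    (∀ p q : X, extDistance δ x y a' b' (Sum.inl p) (Sum.inl q) = δ p q) ∧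
    extDistance δ x y a' b' (Sum.inl x) (Sum.inr false) = a' ∧
    extDistance δ x y a' b' (Sum.inr false) (Sum.inr true) = b' ∧
    extDistance δ x y a' b' (Sum.inr true) (Sum.inl y) = a' :=
  extDistance_is_distance_general δ hδ x y a' b' hab
end

section
/- Let L be a distributive lattice and let a, b, a', b' ∈ L. Then Θ⁺_L(a,b) ∧ Θ⁺_L(a',b') = Θ⁺_L(a ∧ a', b ∨ b') in the congruence lattice of L, where Θ⁺_L(x,y) = Θ_L(x ∧ y, x). -/
/-!
For `c ≤ d` in a distributive lattice, `Θ(c, d)` relates `u` and `v` exactly when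
`u ⊓ c = v ⊓ c` and `u ⊔ d = v ⊔ d`. Through this description the intersection
`Θ⁺(a, b) ∩ Θ⁺(a', b')` is contained in `Θ⁺(a ⊓ a', b ⊔ b')` by distributivity. Conversely, the
generating pair `(a ⊓ a' ⊓ (b ⊔ b'), a ⊓ a')` of `Θ⁺(a ⊓ a', b ⊔ b')` already lies in `Θ⁺(a, b)`
and in `Θ⁺(a', b')`.
-/

/-- A lattice congruence: an equivalence relation compatible with meet and
join. -/
def IsLatCon {L : Type*} [Lattice L] (r : L → L → Prop) : Prop :=
  Equivalence r ∧ (∀ a b c d : L, r a b → r c d → r (a ⊓ c) (b ⊓ d)) ∧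
    (∀ a b c d : L, r a b → r c d → r (a ⊔ c) (b ⊔ d))

/-- The smallest lattice congruence identifying `x` and `y`. -/
def thetaLat {L : Type*} [Lattice L] (x y : L) : L → L → Prop :=
  fun u v => ∀ r : L → L → Prop, IsLatCon r → r x y → r u v

/-- `Θ⁺(x,y) = Θ(x ⊓ y, x)`. -/
def thetaPlus {L : Type*} [Lattice L] (x y : L) : L → L → Prop :=
  thetaLat (x ⊓ y) x

section Lattice

variable {L : Type*} [Lattice L]

theorem thetaLat_le_of_rel {c d p q : L} (h : thetaLat c d p q) :
    thetaLat p q ≤ thetaLat c d :=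
  fun _ _ huv r hr hcd => huv r hr (h r hr hcd)

end Lattice

section DistribLattice

variable {L : Type*} [DistribLattice L]

theorem isLatCon_inf_eq_and_sup_eq (c d : L) :
    IsLatCon fun x y : L => x ⊓ c = y ⊓ c ∧ x ⊔ d = y ⊔ d := by
  refine ⟨⟨fun _ => ⟨rfl, rfl⟩, fun h => ⟨h.1.symm, h.2.symm⟩,
    fun h h' => ⟨h.1.trans h'.1, h.2.trans h'.2⟩⟩, ?_, ?_⟩
  · rintro x y z w ⟨hxy_inf, hxy_sup⟩ ⟨hzw_inf, hzw_sup⟩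
    exact ⟨by rw [inf_inf_distrib_right, hxy_inf, hzw_inf, ← inf_inf_distrib_right],
      by rw [sup_inf_right, hxy_sup, hzw_sup, ← sup_inf_right]⟩
  · rintro x y z w ⟨hxy_inf, hxy_sup⟩ ⟨hzw_inf, hzw_sup⟩
    exact ⟨by rw [inf_sup_right, hxy_inf, hzw_inf, ← inf_sup_right],
      by rw [sup_sup_distrib_right, hxy_sup, hzw_sup, ← sup_sup_distrib_right]⟩

theorem IsLatCon.inf_rel {r : L → L → Prop} (hr : IsLatCon r) {c d u v : L} (hcd : r c d)
    (h_inf : u ⊓ c = v ⊓ c) (h_sup : u ⊔ d = v ⊔ d) : r (u ⊓ v) u := by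
  obtain ⟨hequiv, hr_inf, hr_sup⟩ := hr
  -- apply the polynomial `t ↦ (t ⊓ u) ⊔ (u ⊓ v)` to the pair `(c, d)`
  have h := hr_sup _ _ _ _ (hr_inf _ _ _ _ hcd (hequiv.refl u)) (hequiv.refl (u ⊓ v))
  have at_c : c ⊓ u ⊔ u ⊓ v = u ⊓ v := by
    refine sup_eq_right.2 (le_inf inf_le_right ?_)
    rw [inf_comm, h_inf]
    exact inf_le_left
  have at_d : d ⊓ u ⊔ u ⊓ v = u := by
    rw [inf_comm d, ← inf_sup_left, sup_comm, ← h_sup, inf_sup_self]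
  rwa [at_c, at_d] at h

theorem thetaLat_of_inf_eq_of_sup_eq {c d u v : L} (h_inf : u ⊓ c = v ⊓ c)
    (h_sup : u ⊔ d = v ⊔ d) : thetaLat c d u v := by
  intro r hr hcd
  have hu : r (u ⊓ v) u := hr.inf_rel hcd h_inf h_sup
  have hv : r (u ⊓ v) v := inf_comm v u ▸ hr.inf_rel hcd h_inf.symm h_sup.symm
  exact hr.1.trans (hr.1.symm hu) hv

theorem thetaLat_iff {c d u v : L} (hcd : c ≤ d) :
    thetaLat c d u v ↔ u ⊓ c = v ⊓ c ∧ u ⊔ d = v ⊔ d := by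
  refine ⟨fun h => h _ (isLatCon_inf_eq_and_sup_eq c d) ⟨?_, ?_⟩,
    fun h => thetaLat_of_inf_eq_of_sup_eq h.1 h.2⟩
  · rw [inf_idem, inf_eq_right.2 hcd]
  · rw [sup_idem, sup_eq_right.2 hcd]

theorem thetaPlus_iff {x y u v : L} :
    thetaPlus x y u v ↔ u ⊓ (x ⊓ y) = v ⊓ (x ⊓ y) ∧ u ⊔ x = v ⊔ x :=
  thetaLat_iff inf_le_left

theorem thetaPlus_inf_sup_le_left (a b a' b' : L) :
    thetaPlus (a ⊓ a') (b ⊔ b') ≤ thetaPlus a b := by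
  refine thetaLat_le_of_rel (thetaPlus_iff.2 ⟨?_, ?_⟩)
  · simp [inf_left_comm, inf_comm]
  · rw [sup_eq_right.2 (inf_le_left.trans inf_le_left), sup_eq_right.2 inf_le_left]

end DistribLattice

/-- In a distributive lattice `L`,
`Θ⁺(a,b) ∧ Θ⁺(a',b') = Θ⁺(a ⊓ a', b ⊔ b')` in the congruence lattice of `L`
(meet of congruences is their intersection). -/
theorem thetaPlus_inf {L : Type*} [DistribLattice L] (a b a' b' : L) :
    ∀ u v : L, (thetaPlus a b u v ∧ thetaPlus a' b' u v) ↔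
      thetaPlus (a ⊓ a') (b ⊔ b') u v := by
  intro u v
  constructor
  · rintro ⟨h, h'⟩
    rw [thetaPlus_iff] at h h' ⊢
    have inf_eq : ∀ w : L,
        w ⊓ (a ⊓ a' ⊓ (b ⊔ b')) = w ⊓ (a ⊓ b) ⊓ a' ⊔ w ⊓ (a' ⊓ b') ⊓ a := by
      intro w
      rw [inf_sup_left, inf_sup_left]
      ac_rfl
    exact ⟨by rw [inf_eq u, inf_eq v, h.1, h'.1],
      by rw [sup_inf_left, h.2, h'.2, ← sup_inf_left]⟩
  · intro h
    refine ⟨thetaPlus_inf_sup_le_left a b a' b' u v h,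
      thetaPlus_inf_sup_le_left a' b' a b u v ?_⟩
    rwa [inf_comm a', sup_comm b']
end

section
/- If an algebra A has almost permutable congruences (i.e., a ∨ b = (a∘b) ∪ (b∘a) for all congruences a, b of A), then the canonical distance Θ_A : A × A → Con_c(A), (x,y) ↦ Θ_A(x,y), is a V-distance of type 3/2; consequently the compact congruence semilattice Con_c(A) satisfies WURP=(e) for every e ∈ Con_c(A). -/
/-!
Almost permutability joins two points that are congruent modulo `a ∨ b` through some `z`, by
an `a`-step and a `b`-step in one of the two orders; since `Θ(x, y) ≤ r` just means `r x y`,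
this is the V-distance property of `Θ`. For `WURP⁼(e)`, write `e = Θ(x, y)` for finite tuples
`x`, `y` and split every generator `(x t, y t)` along `a i ∨ b i` through a point `z i t`.
Indices whose splittings all have the same orientations form one block (so `m = 2 ^ n`
blocks suffice, independently of the family), and `c i j = Θ(z i, z j)`. Within a block the
two splittings of a generator run in parallel, which yields the three inequalities, and the
transitivity of `c` holds for all indices since `z j t` links `z i t` to `z k t`.
-/

universe u

section UniversalAlgebra

variable {ι A : Type*}

/-- `r` is a congruence of the algebra `A` with operations `ops i` of arity
`F i`. -/
def IsCong (F : ι → ℕ) (ops : ∀ i, (Fin (F i) → A) → A) (r : A → A → Prop) : Prop :=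
  Equivalence r ∧
    ∀ i (f g : Fin (F i) → A), (∀ k, r (f k) (g k)) → r (ops i f) (ops i g)

/-- The congruence generated by a binary relation `s`. -/
def congGen (F : ι → ℕ) (ops : ∀ i, (Fin (F i) → A) → A) (s : A → A → Prop) :
    A → A → Prop :=
  fun u v => ∀ r : A → A → Prop, IsCong F ops r → (∀ p q, s p q → r p q) → r u v

/-- The principal congruence `Θ(x,y)`. -/
def theta (F : ι → ℕ) (ops : ∀ i, (Fin (F i) → A) → A) (x y : A) : A → A → Prop :=
  congGen F ops fun p q => p = x ∧ q = y

/-- The join of two congruences in the congruence lattice. -/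
def congSup (F : ι → ℕ) (ops : ∀ i, (Fin (F i) → A) → A) (a b : A → A → Prop) :
    A → A → Prop :=
  congGen F ops fun p q => a p q ∨ b p q

/-- A compact (= finitely generated) congruence. -/
def FGCong (F : ι → ℕ) (ops : ∀ i, (Fin (F i) → A) → A) (r : A → A → Prop) : Prop :=
  ∃ l : List (A × A), r = congGen F ops fun p q => (p, q) ∈ l

def AlmostPermutable (F : ι → ℕ) (ops : ∀ i, (Fin (F i) → A) → A) : Prop :=
  ∀ a b : A → A → Prop, IsCong F ops a → IsCong F ops b →
    ∀ x y : A, congSup F ops a b x y ↔ ((∃ z, a x z ∧ b z y) ∨ (∃ z, b x z ∧ a z y))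

def thetaTuple (F : ι → ℕ) (ops : ∀ i, (Fin (F i) → A) → A) {T : Type*} (u v : T → A) :
    A → A → Prop :=
  congGen F ops fun p q => ∃ t, u t = p ∧ v t = q

def IsSplit (a b : A → A → Prop) (x z y : A) : Bool → Prop
  | true => a x z ∧ b z y
  | false => b x z ∧ a z y

section Relations

variable {r a b a' b' : A → A → Prop} {x y z z' : A} {o : Bool}

theorem IsSplit.rel_left (hr : Equivalence r) (ha : a ≤ r) (ha' : a' ≤ r)
    (h : IsSplit a b x z y o) (h' : IsSplit a' b' x z' y o) : r z z' := by
  cases o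
  · exact hr.trans (ha _ _ h.2) (hr.symm (ha' _ _ h'.2))
  · exact hr.trans (hr.symm (ha _ _ h.1)) (ha' _ _ h'.1)

theorem IsSplit.rel_right (hr : Equivalence r) (hb : b ≤ r) (hb' : b' ≤ r)
    (h : IsSplit a b x z y o) (h' : IsSplit a' b' x z' y o) : r z z' := by
  cases o
  · exact hr.trans (hr.symm (hb _ _ h.1)) (hb' _ _ h'.1)
  · exact hr.trans (hb _ _ h.2) (hr.symm (hb' _ _ h'.2))

theorem IsSplit.rel_ends (hr : Equivalence r) (ha' : a' ≤ r) (hb : b ≤ r) (hz : r z z')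
    (h : IsSplit a b x z y o) (h' : IsSplit a' b' x z' y o) : r x y := by
  cases o
  · exact hr.trans (hb _ _ h.1) (hr.trans hz (ha' _ _ h'.2))
  · exact hr.trans (ha' _ _ h'.1) (hr.trans (hr.symm hz) (hb _ _ h.2))

end Relations

section Congruences

variable {F : ι → ℕ} {ops : ∀ i, (Fin (F i) → A) → A} {T : Type*}

theorem congGen_isCong (s : A → A → Prop) : IsCong F ops (congGen F ops s) :=
  ⟨⟨fun u _ hr _ => hr.1.refl u, fun h r hr hs => hr.1.symm (h r hr hs),
      fun h₁ h₂ r hr hs => hr.1.trans (h₁ r hr hs) (h₂ r hr hs)⟩,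
    fun i _ _ hfg r hr hs => hr.2 i _ _ fun k => hfg k r hr hs⟩

theorem le_congGen (s : A → A → Prop) : s ≤ congGen F ops s :=
  fun p q h _ _ hs => hs p q h

theorem congGen_le_iff {s r : A → A → Prop} (hr : IsCong F ops r) :
    congGen F ops s ≤ r ↔ s ≤ r :=
  ⟨(le_congGen s).trans, fun hs _ _ h => h r hr hs⟩

theorem theta_le_iff {x y : A} {r : A → A → Prop} (hr : IsCong F ops r) :
    theta F ops x y ≤ r ↔ r x y := by
  refine (congGen_le_iff hr).trans ⟨fun h => h x y ⟨rfl, rfl⟩, ?_⟩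
  rintro h p q ⟨rfl, rfl⟩
  exact h

theorem thetaTuple_rel (u v : T → A) (t : T) : thetaTuple F ops u v (u t) (v t) :=
  le_congGen _ _ _ ⟨t, rfl, rfl⟩

theorem thetaTuple_le_iff {u v : T → A} {r : A → A → Prop} (hr : IsCong F ops r) :
    thetaTuple F ops u v ≤ r ↔ ∀ t, r (u t) (v t) := by
  refine (congGen_le_iff hr).trans ⟨fun h t => h _ _ ⟨t, rfl, rfl⟩, ?_⟩
  rintro h p q ⟨t, rfl, rfl⟩
  exact h t

theorem congSup_isCong (a b : A → A → Prop) : IsCong F ops (congSup F ops a b) :=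
  congGen_isCong _

theorem left_le_congSup (a b : A → A → Prop) : a ≤ congSup F ops a b :=
  fun p q h => le_congGen _ p q (Or.inl h)

theorem right_le_congSup (a b : A → A → Prop) : b ≤ congSup F ops a b :=
  fun p q h => le_congGen _ p q (Or.inr h)

theorem thetaTuple_le_congSup (u v w : T → A) :
    thetaTuple F ops u w ≤
      congSup F ops (thetaTuple F ops u v) (thetaTuple F ops v w) :=
  (thetaTuple_le_iff (congSup_isCong _ _)).2 fun t =>
    (congSup_isCong _ _).1.trans (left_le_congSup _ _ _ _ (thetaTuple_rel u v t))
      (right_le_congSup _ _ _ _ (thetaTuple_rel v w t))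

theorem FGCong.isCong {r : A → A → Prop} (h : FGCong F ops r) : IsCong F ops r := by
  obtain ⟨l, rfl⟩ := h
  exact congGen_isCong _

theorem fgCong_thetaTuple {n : ℕ} (u v : Fin n → A) : FGCong F ops (thetaTuple F ops u v) := by
  refine ⟨List.ofFn fun t => (u t, v t), ?_⟩
  simp [thetaTuple, List.mem_ofFn]

theorem FGCong.exists_thetaTuple {r : A → A → Prop} (h : FGCong F ops r) :
    ∃ (n : ℕ) (u v : Fin n → A), r = thetaTuple F ops u v := by
  obtain ⟨l, rfl⟩ := h
  refine ⟨l.length, fun t => l[t].1, fun t => l[t].2, ?_⟩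
  simp [thetaTuple, List.mem_iff_get, Prod.ext_iff]

end Congruences

section AlmostPermutable

variable {F : ι → ℕ} {ops : ∀ i, (Fin (F i) → A) → A}

theorem AlmostPermutable.exists_isSplit (h : AlmostPermutable F ops) {a b : A → A → Prop}
    (ha : IsCong F ops a) (hb : IsCong F ops b) {x y : A} (hxy : congSup F ops a b x y) :
    ∃ z o, IsSplit a b x z y o := by
  rcases (h a b ha hb x y).1 hxy with ⟨z, hz⟩ | ⟨z, hz⟩
  exacts [⟨z, true, hz⟩, ⟨z, false, hz⟩]

theorem AlmostPermutable.exists_theta_split (h : AlmostPermutable F ops)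
    {a b : A → A → Prop} (ha : IsCong F ops a) (hb : IsCong F ops b) {x y : A}
    (hxy : theta F ops x y ≤ congSup F ops a b) :
    ∃ z, (theta F ops x z ≤ a ∧ theta F ops z y ≤ b) ∨
      (theta F ops x z ≤ b ∧ theta F ops z y ≤ a) := by
  obtain ⟨z, o, hz⟩ := h.exists_isSplit ha hb ((theta_le_iff (congSup_isCong a b)).1 hxy)
  cases o
  · exact ⟨z, .inr ⟨(theta_le_iff hb).2 hz.1, (theta_le_iff ha).2 hz.2⟩⟩
  · exact ⟨z, .inl ⟨(theta_le_iff ha).2 hz.1, (theta_le_iff hb).2 hz.2⟩⟩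

theorem AlmostPermutable.exists_wurp_witnesses (h : AlmostPermutable F ops) {n : ℕ}
    (x y : Fin n → A) {I : Type*} (a b : I → A → A → Prop) (ha : ∀ i, IsCong F ops (a i))
    (hb : ∀ i, IsCong F ops (b i)) (hab : ∀ i, thetaTuple F ops x y ≤ congSup F ops (a i) (b i)) :
    ∃ (J : Fin (Fintype.card (Fin n → Bool)) → Set I) (c : I → I → A → A → Prop),
      (∀ i j, FGCong F ops (c i j)) ∧
      (∀ i, ∃ w, i ∈ J w) ∧
      (∀ w, ∀ i ∈ J w, ∀ j ∈ J w,
        c i j ≤ congSup F ops (a i) (a j) ∧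
        c i j ≤ congSup F ops (b i) (b j) ∧
        thetaTuple F ops x y ≤ congSup F ops (congSup F ops (a j) (b i)) (c i j)) ∧
      (∀ i j k, c i k ≤ congSup F ops (c i j) (c j k)) := by
  choose z o hz using fun i t =>
    h.exists_isSplit (ha i) (hb i) ((thetaTuple_le_iff (congSup_isCong _ _)).1 (hab i) t)
  let σ := Fintype.equivFin (Fin n → Bool)
  refine ⟨fun w => {i | σ (o i) = w}, fun i j => thetaTuple F ops (z i) (z j),
    fun i j => fgCong_thetaTuple _ _, fun i => ⟨σ (o i), rfl⟩, ?_,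
    fun i j k => thetaTuple_le_congSup _ _ _⟩
  rintro w i (hi : σ (o i) = w) j (hj : σ (o j) = w)
  have hzj : ∀ t, IsSplit (a j) (b j) (x t) (z j t) (y t) (o i t) := by
    rw [σ.injective (hi.trans hj.symm)]
    exact hz j
  refine ⟨(thetaTuple_le_iff (congSup_isCong _ _)).2 fun t => ?_,
    (thetaTuple_le_iff (congSup_isCong _ _)).2 fun t => ?_,
    (thetaTuple_le_iff (congSup_isCong _ _)).2 fun t => ?_⟩
  · exact (hz i t).rel_left (congSup_isCong _ _).1 (left_le_congSup _ _)
      (right_le_congSup _ _) (hzj t)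
  · exact (hz i t).rel_right (congSup_isCong _ _).1 (left_le_congSup _ _)
      (right_le_congSup _ _) (hzj t)
  · exact (hz i t).rel_ends (congSup_isCong _ _).1
      ((left_le_congSup _ _).trans (left_le_congSup _ _))
      ((right_le_congSup _ _).trans (left_le_congSup _ _))
      (right_le_congSup _ _ _ _ (thetaTuple_rel _ _ t)) (hzj t)

end AlmostPermutable

/-- If an algebra `A` has almost permutable congruences, i.e.
`a ⊔ b = (a ∘ b) ∪ (b ∘ a)` for all congruences `a`, `b`, then the canonical
distance `(x, y) ↦ Θ_A(x,y)` is a V-distance of type 3/2, and consequently the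
semilattice `Con_c A` of compact congruences satisfies `WURP⁼(e)` for every
compact congruence `e`. -/
theorem wurp_of_almost_permutable (F : ι → ℕ) (ops : ∀ i, (Fin (F i) → A) → A)
    (halmost : ∀ a b : A → A → Prop, IsCong F ops a → IsCong F ops b →
      ∀ x y : A, congSup F ops a b x y ↔
        ((∃ z, a x z ∧ b z y) ∨ (∃ z, b x z ∧ a z y))) :
    -- Θ is a V-distance of type 3/2:
    (∀ x y : A, ∀ a b : A → A → Prop, FGCong F ops a → FGCong F ops b →
      (∀ u v, theta F ops x y u v → congSup F ops a b u v) →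
      ∃ z : A,
        ((∀ u v, theta F ops x z u v → a u v) ∧ (∀ u v, theta F ops z y u v → b u v)) ∨
        ((∀ u v, theta F ops x z u v → b u v) ∧ (∀ u v, theta F ops z y u v → a u v))) ∧
    -- Con_c A satisfies WURP⁼(e) for every compact congruence e:
    (∀ e : A → A → Prop, FGCong F ops e →
      ∃ m : ℕ, 0 < m ∧
        ∀ (I : Type u) (a b : I → (A → A → Prop)),
          (∀ i, FGCong F ops (a i)) → (∀ i, FGCong F ops (b i)) →
          (∀ i, ∀ u v, e u v → congSup F ops (a i) (b i) u v) →
          ∃ (J : Fin m → Set I) (c : I → I → (A → A → Prop)),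
            (∀ i j, FGCong F ops (c i j)) ∧
            (∀ i : I, ∃ w : Fin m, i ∈ J w) ∧
            (∀ w : Fin m, ∀ i ∈ J w, ∀ j ∈ J w,
              (∀ u v, c i j u v → congSup F ops (a i) (a j) u v) ∧
              (∀ u v, c i j u v → congSup F ops (b i) (b j) u v) ∧
              (∀ u v, e u v →
                congSup F ops (congSup F ops (a j) (b i)) (c i j) u v)) ∧
            (∀ i j k : I, ∀ u v, c i k u v →
              congSup F ops (c i j) (c j k) u v)) := by
  have h : AlmostPermutable F ops := halmost
  refine ⟨fun x y a b ha hb hxy => h.exists_theta_split ha.isCong hb.isCong hxy,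
    fun e he => ?_⟩
  obtain ⟨n, x, y, rfl⟩ := he.exists_thetaTuple
  exact ⟨_, Fintype.card_pos, fun I a b ha hb hab =>
    h.exists_wurp_witnesses x y a b (fun i => (ha i).isCong) (fun i => (hb i).isCong) hab⟩

end UniversalAlgebra
end
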